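/- arXiv:2105.12813 — 4 statements merged into one kernel-verified Lean document; each statement's English description precedes it below -/
import Mathlib

section
/- For any real number ε with 0 < ε < 1/e, there exist a constant C > 0 and a real number Λ with 0 < Λ < 1 such that for all positive integers n and ℓ with ℓ ≥ (1 − 1/e + ε)·n and ℓ ≤ n, one has n^{−n}·∑_{j=ℓ}^{n} a(n,j) ≤ C·n^{3/2}·Λ^n. -/
/-!
The inclusion–exclusion sum `j! S(n,j)` is nonnegative (it satisfies the Stirling recurrence),
and its exponential generating function in `n` is `(eˣ - 1)ʲ`; evaluating at `x = 1` gives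
`j! S(n,j) ≤ n! (e - 1)ʲ`. Hence `∑_{j ≥ ℓ} a(n,j) ≤ n! ∑_{j ≥ ℓ} C(n,j) (e - 1)ʲ`, and a Chernoff
bound with weight `(1 + δ)ʲ` makes this at most `n! eⁿ (1 + (1 - 1/e) δ)ⁿ / (1 + δ)^ℓ`.
Stirling's upper bound `n! ≤ e √n (n/e)ⁿ` cancels `n⁻ⁿ eⁿ`, and for `ℓ ≥ (1 - 1/e + ε) n` and
`δ = ε/2` the remaining ratio is `Λⁿ` with `Λ = (1 + (1 - 1/e) δ) / (1 + δ)^(1 - 1/e + ε) < 1`.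
-/

noncomputable def stirling2 (n j : ℕ) : ℝ :=
  (1 / (Nat.factorial j : ℝ)) *
    ∑ i ∈ Finset.range (j + 1), (-1 : ℝ) ^ i * (Nat.choose j i : ℝ) * ((j - i : ℕ) : ℝ) ^ n

noncomputable def a (n j : ℕ) : ℝ :=
  (Nat.choose n j : ℝ) * (Nat.factorial j : ℝ) * stirling2 n j

open Finset Nat Real

/-- Indexed by `k = j - i` compared with `stirling2`, so that no truncated subtraction occurs. -/
noncomputable def surjCount (n j : ℕ) : ℝ :=
  ∑ k ∈ range (j + 1), (-1 : ℝ) ^ (j + k) * j.choose k * (k : ℝ) ^ n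

lemma factorial_mul_stirling2 (n j : ℕ) : (j ! : ℝ) * stirling2 n j = surjCount n j := by
  rw [stirling2, ← mul_assoc, mul_one_div_cancel (by positivity), one_mul, surjCount,
    ← sum_range_reflect]
  refine sum_congr rfl fun i hi => ?_
  have hij : i ≤ j := Nat.lt_succ_iff.mp (mem_range.mp hi)
  rw [Nat.add_sub_cancel, Nat.sub_sub_self hij, choose_symm hij,
    show j + i = (j - i) + 2 * i by omega, pow_add, pow_mul]
  simp

lemma surjCount_zero_left (j : ℕ) : surjCount 0 j = if j = 0 then 1 else 0 := by
  have h := Int.alternating_sum_range_choose (n := j)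
  simp only [surjCount, pow_zero, mul_one, pow_add, mul_assoc, ← mul_sum]
  rw [← Int.cast_inj (α := ℝ)] at h
  push_cast at h
  rw [h]
  split_ifs with hj <;> simp [hj]

lemma surjCount_succ_zero (n : ℕ) : surjCount (n + 1) 0 = 0 := by
  simp [surjCount]

lemma surjCount_succ_succ_eq_mul_sum (n j : ℕ) :
    surjCount (n + 1) (j + 1) =
      (j + 1) * ∑ k ∈ range (j + 1), (-1 : ℝ) ^ (j + k) * j.choose k * ((k : ℝ) + 1) ^ n := by
  rw [surjCount, sum_range_succ', mul_sum]
  simp only [Nat.cast_zero, zero_pow (Nat.succ_ne_zero n), mul_zero, add_zero]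
  refine sum_congr rfl fun k _ => ?_
  have h : ((j + 1).choose (k + 1) : ℝ) * (k + 1) = (j + 1) * j.choose k := by
    exact_mod_cast (Nat.add_one_mul_choose_eq j k).symm
  rw [show j + 1 + (k + 1) = j + k + 2 by ring, pow_add _ _ 2]
  push_cast
  linear_combination (-1 : ℝ) ^ (j + k) * ((k : ℝ) + 1) ^ n * h

lemma surjCount_add_surjCount_succ (n j : ℕ) :
    surjCount n j + surjCount n (j + 1) =
      ∑ k ∈ range (j + 1), (-1 : ℝ) ^ (j + k) * j.choose k * ((k : ℝ) + 1) ^ n := by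
  have hj : surjCount n j =
      ∑ k ∈ range (j + 2), (-1 : ℝ) ^ (j + k) * j.choose k * (k : ℝ) ^ n := by
    rw [surjCount, sum_range_succ _ (j + 1), choose_succ_self]
    simp
  rw [hj, surjCount, sum_range_succ', sum_range_succ' _ (j + 1), add_add_add_comm,
    ← sum_add_distrib]
  have hzero : (-1 : ℝ) ^ (j + 0) * j.choose 0 * ((0 : ℕ) : ℝ) ^ n +
      (-1) ^ (j + 1 + 0) * (j + 1).choose 0 * ((0 : ℕ) : ℝ) ^ n = 0 := by
    simp [pow_succ]
  rw [hzero, add_zero]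
  refine sum_congr rfl fun k _ => ?_
  rw [choose_succ_succ', show j + 1 + (k + 1) = j + k + 2 by ring,
    show j + (k + 1) = j + k + 1 by ring]
  push_cast
  ring

lemma surjCount_succ_succ (n j : ℕ) :
    surjCount (n + 1) (j + 1) = (j + 1) * (surjCount n (j + 1) + surjCount n j) := by
  rw [surjCount_succ_succ_eq_mul_sum, add_comm (surjCount n _), surjCount_add_surjCount_succ]

lemma surjCount_eq_factorial_mul_stirlingSecond (n j : ℕ) :
    surjCount n j = j ! * n.stirlingSecond j := by
  induction n generalizing j with
  | zero => cases j <;> simp [surjCount_zero_left]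
  | succ n ih =>
    cases j with
    | zero => simp [surjCount_succ_zero]
    | succ j =>
      rw [surjCount_succ_succ, ih, ih, stirlingSecond_succ_succ, factorial_succ]
      push_cast
      ring

lemma hasSum_surjCount_div_factorial (j : ℕ) :
    HasSum (fun m => surjCount m j / m !) ((exp 1 - 1) ^ j) := by
  have hexp (k : ℕ) : HasSum (fun m => (-1 : ℝ) ^ (j + k) * j.choose k * ((k : ℝ) ^ m / m !))
      ((-1) ^ (j + k) * j.choose k * exp k) := by
    rw [exp_eq_exp_ℝ]
    exact (NormedSpace.expSeries_div_hasSum_exp (k : ℝ)).mul_left _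
  have hbinom : (exp 1 - 1) ^ j = ∑ k ∈ range (j + 1), (-1) ^ (j + k) * j.choose k * exp k := by
    rw [show exp 1 - 1 = -1 * (-exp 1 + 1) by ring, mul_pow, add_pow, mul_sum]
    refine sum_congr rfl fun k _ => ?_
    rw [← exp_one_pow]
    ring
  rw [hbinom]
  convert hasSum_sum fun k _ => hexp k using 1
  ext m
  simp only [surjCount, sum_div, mul_div_assoc]

lemma surjCount_le (n j : ℕ) : surjCount n j ≤ n ! * (exp 1 - 1) ^ j := by
  have h := le_hasSum (hasSum_surjCount_div_factorial j) n fun m _ => by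
    rw [surjCount_eq_factorial_mul_stirlingSecond]; positivity
  rwa [div_le_iff₀' (by positivity)] at h

lemma pow_mul_sum_Icc_choose_mul_pow_le {u t : ℝ} (hu : 0 ≤ u) (ht : 1 ≤ t) (ℓ n : ℕ) :
    t ^ ℓ * ∑ j ∈ Icc ℓ n, (n.choose j : ℝ) * u ^ j ≤ (t * u + 1) ^ n :=
  calc t ^ ℓ * ∑ j ∈ Icc ℓ n, (n.choose j : ℝ) * u ^ j
      ≤ ∑ j ∈ Icc ℓ n, (t * u) ^ j * 1 ^ (n - j) * n.choose j := by
        rw [mul_sum]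
        refine sum_le_sum fun j hj => ?_
        have : t ^ ℓ ≤ t ^ j := pow_le_pow_right₀ ht (mem_Icc.mp hj).1
        rw [one_pow, mul_one, mul_pow]
        nlinarith [show 0 ≤ (n.choose j : ℝ) * u ^ j by positivity]
    _ ≤ ∑ j ∈ range (n + 1), (t * u) ^ j * 1 ^ (n - j) * n.choose j :=
        sum_le_sum_of_subset_of_nonneg (fun j hj => by simp at hj ⊢; omega)
          fun _ _ _ => by positivity
    _ = (t * u + 1) ^ n := (add_pow _ _ _).symm

lemma factorial_le_exp_one_mul_sqrt_mul_pow {n : ℕ} (hn : n ≠ 0) :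
    (n ! : ℝ) ≤ exp 1 * √n * (n / exp 1) ^ n := by
  obtain ⟨m, rfl⟩ : ∃ m, n = m + 1 := exists_eq_add_one.mpr (pos_of_ne_zero hn)
  have h : Stirling.stirlingSeq (m + 1) ≤ exp 1 / √2 := by
    simpa using Stirling.stirlingSeq'_antitone (zero_le m)
  rw [Stirling.stirlingSeq, div_le_div_iff₀ (by positivity) (by positivity)] at h
  have hsqrt : √(2 * ((m + 1 : ℕ) : ℝ)) = √2 * √((m + 1 : ℕ) : ℝ) := sqrt_mul (by norm_num) _
  rw [hsqrt] at h
  rw [← mul_le_mul_iff_left₀ (by positivity : (0 : ℝ) < √2)]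
  linarith

lemma one_add_mul_lt_rpow {β s δ : ℝ} (hβ : 0 ≤ β) (hδ : 0 < δ) (h : β * (1 + δ) < s) :
    1 + β * δ < (1 + δ) ^ s := by
  have hs : 0 ≤ s := by nlinarith
  have hlog : δ / (1 + δ) ≤ log (1 + δ) := by
    have := one_sub_inv_le_log_of_pos (by linarith : 0 < 1 + δ)
    rwa [show 1 - (1 + δ)⁻¹ = δ / (1 + δ) by field_simp; ring] at this
  have hlt : β * δ < s * (δ / (1 + δ)) := by
    rw [mul_div_assoc', lt_div_iff₀ (by linarith)]
    nlinarith
  calc 1 + β * δ < 1 + s * log (1 + δ) := by nlinarith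
    _ ≤ exp (log (1 + δ) * s) := by linarith [add_one_le_exp (log (1 + δ) * s)]
    _ = (1 + δ) ^ s := (rpow_def_of_pos (by linarith) s).symm

lemma a_le (n j : ℕ) : a n j ≤ n ! * (n.choose j * (exp 1 - 1) ^ j) := by
  rw [a, mul_assoc, factorial_mul_stirling2, mul_left_comm]
  exact mul_le_mul_of_nonneg_left (surjCount_le n j) (by positivity)

lemma rpow_neg_mul_pow_mul_sum_a_le {δ : ℝ} (hδ : 0 ≤ δ) {n : ℕ} (hn : n ≠ 0) (ℓ : ℕ) :
    (n : ℝ) ^ (-(n : ℝ)) * (1 + δ) ^ ℓ * ∑ j ∈ Icc ℓ n, a n j ≤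
      exp 1 * √n * (1 + (1 - 1 / exp 1) * δ) ^ n := by
  have hsum :
      (1 + δ) ^ ℓ * ∑ j ∈ Icc ℓ n, a n j ≤ n ! * (exp 1 * (1 + (1 - 1 / exp 1) * δ)) ^ n :=
    calc (1 + δ) ^ ℓ * ∑ j ∈ Icc ℓ n, a n j
        ≤ (1 + δ) ^ ℓ * (n ! * ∑ j ∈ Icc ℓ n, (n.choose j : ℝ) * (exp 1 - 1) ^ j) := by
          refine mul_le_mul_of_nonneg_left ?_ (by positivity)
          rw [mul_sum]
          exact sum_le_sum fun j _ => a_le n j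
      _ = n ! * ((1 + δ) ^ ℓ * ∑ j ∈ Icc ℓ n, (n.choose j : ℝ) * (exp 1 - 1) ^ j) := by ring
      _ ≤ n ! * ((1 + δ) * (exp 1 - 1) + 1) ^ n := by
          gcongr
          exact pow_mul_sum_Icc_choose_mul_pow_le (by linarith [add_one_le_exp 1]) (by linarith) ℓ n
      _ = n ! * (exp 1 * (1 + (1 - 1 / exp 1) * δ)) ^ n := by
          congr 2
          field_simp
          ring
  have hpos : (0 : ℝ) < n := by positivity
  have hβ : 0 ≤ 1 - 1 / exp 1 := by
    rw [sub_nonneg, div_le_one (exp_pos 1)]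
    exact one_le_exp zero_le_one
  calc (n : ℝ) ^ (-(n : ℝ)) * (1 + δ) ^ ℓ * ∑ j ∈ Icc ℓ n, a n j
      ≤ (n : ℝ) ^ (-(n : ℝ)) * (n ! * (exp 1 * (1 + (1 - 1 / exp 1) * δ)) ^ n) := by
        rw [mul_assoc]
        gcongr
    _ ≤ (n : ℝ) ^ (-(n : ℝ)) * (exp 1 * √n * (n / exp 1) ^ n *
          (exp 1 * (1 + (1 - 1 / exp 1) * δ)) ^ n) := by
        gcongr
        exact factorial_le_exp_one_mul_sqrt_mul_pow hn
    _ = exp 1 * √n * (1 + (1 - 1 / exp 1) * δ) ^ n := by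
        rw [rpow_neg hpos.le, rpow_natCast, mul_pow, div_pow]
        field_simp

theorem stmt_2_general (ε : ℝ) (hε0 : 0 < ε) :
    ∃ C Λ : ℝ, 0 < C ∧ 0 < Λ ∧ Λ < 1 ∧
      ∀ n ℓ : ℕ, 0 < n → 0 < ℓ → (1 - 1 / Real.exp 1 + ε) * n ≤ (ℓ : ℝ) → ℓ ≤ n →
        (n : ℝ) ^ (-(n : ℝ)) * ∑ j ∈ Finset.Icc ℓ n, a n j ≤
          C * (n : ℝ) ^ ((3 : ℝ) / 2) * Λ ^ n := by
  set β := 1 - 1 / exp 1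
  set δ := ε / 2 with hδ_def
  have hβ : 0 ≤ β ∧ β < 1 := ⟨by simp [β, inv_le_one_of_one_le₀ (one_le_exp zero_le_one)],
    by simp [β, exp_pos]⟩
  have hδ : 0 < δ := half_pos hε0
  have hbase : 0 < (1 + δ) ^ (β + ε) := rpow_pos_of_pos (by linarith) _
  have hβδ : β * (1 + δ) < β + ε := by nlinarith [mul_lt_mul_of_pos_right hβ.2 hδ]
  refine ⟨exp 1, (1 + β * δ) / (1 + δ) ^ (β + ε), exp_pos 1, div_pos (by nlinarith) hbase,
    (div_lt_one hbase).mpr (one_add_mul_lt_rpow hβ.1 hδ hβδ), ?_⟩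
  intro n ℓ hn _ hℓ _
  have hpow : ((1 + δ) ^ (β + ε)) ^ n ≤ (1 + δ) ^ ℓ := by
    rw [← rpow_natCast, ← rpow_mul (by linarith), ← rpow_natCast (1 + δ) ℓ]
    exact rpow_le_rpow_of_exponent_le (by linarith) hℓ
  have hsqrt : √n ≤ (n : ℝ) ^ ((3 : ℝ) / 2) := by
    rw [sqrt_eq_rpow]
    exact rpow_le_rpow_of_exponent_le (by exact_mod_cast hn) (by norm_num)
  have hX : 0 < 1 + β * δ := by nlinarith
  have h := rpow_neg_mul_pow_mul_sum_a_le hδ.le hn.ne' ℓ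
  rw [mul_right_comm, ← le_div_iff₀ (by positivity)] at h
  calc (n : ℝ) ^ (-(n : ℝ)) * ∑ j ∈ Icc ℓ n, a n j
      ≤ exp 1 * √n * (1 + β * δ) ^ n / (1 + δ) ^ ℓ := h
    _ ≤ exp 1 * (n : ℝ) ^ ((3 : ℝ) / 2) * (1 + β * δ) ^ n / ((1 + δ) ^ (β + ε)) ^ n := by
        gcongr
    _ = exp 1 * (n : ℝ) ^ ((3 : ℝ) / 2) * ((1 + β * δ) / (1 + δ) ^ (β + ε)) ^ n := by
        rw [div_pow, mul_div_assoc]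

theorem stmt_2 (ε : ℝ) (hε0 : 0 < ε) (hε1 : ε < 1 / Real.exp 1) :
    ∃ C Λ : ℝ, 0 < C ∧ 0 < Λ ∧ Λ < 1 ∧
      ∀ n ℓ : ℕ, 0 < n → 0 < ℓ → (1 - 1 / Real.exp 1 + ε) * n ≤ (ℓ : ℝ) → ℓ ≤ n →
        (n : ℝ) ^ (-(n : ℝ)) * ∑ j ∈ Finset.Icc ℓ n, a n j ≤
          C * (n : ℝ) ^ ((3 : ℝ) / 2) * Λ ^ n :=
  stmt_2_general ε hε0
end

section
/- For every real number ε with 0 < ε < 1, the series ∑_{n≥1} n^{−n}·( ∑_{1 ≤ j ≤ (1−1/e−ε)n} a(n,j) + ∑_{(1−1/e+ε)n ≤ j ≤ n} a(n,j) ) converges (is finite). -/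
/-!
Let `D f` be the number of distinct letters of a word `f : Fin n → Fin n`; then `a n j` is the
number of words with `D f = j` (both sides satisfy the recursion of Stirling numbers of the second
kind). Appending a letter multiplies `exp (t * D)` by a factor with conditional mean
`n * exp t + (1 - exp t) * D`, which varies with `D` oppositely to `exp (t * D)`; Chebyshev's sum
inequality therefore gives, one letter at a time, the moment generating function bound
`∑ f, exp (t * D f) ≤ n ^ n * exp ((exp t - 1) * n * (1 - (1 - 1/n) ^ n))`, and
`n * (1 - (1 - 1/n) ^ n)` is within `1` of `(1 - 1/e) * n`. A Chernoff bound with `t = ∓ε/2`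
bounds each tail by `n ^ n * exp (2 - ε² n / 4)`, so the series is dominated by a geometric one.
-/

open Finset Real

lemma sum_fin_succ_fun {β M : Type*} [Fintype β] [AddCommMonoid M] {k : ℕ}
    (F : (Fin (k + 1) → β) → M) : ∑ f, F f = ∑ g : Fin k → β, ∑ v, F (Fin.cons v g) := by
  rw [← (Fin.consEquiv fun _ => β).sum_comp, Fintype.sum_prod_type, sum_comm]
  rfl

lemma antivary_exp_mul {α : Type*} (D : α → ℝ) (t c : ℝ) :
    Antivary (fun x => exp (t * D x)) (fun x => c + (1 - exp t) * D x) := by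
  intro i j hij
  simp only [Real.exp_le_exp]
  rcases le_total t 0 with ht | ht
  · have : 0 ≤ 1 - exp t := sub_nonneg.2 (Real.exp_le_one_iff.2 ht)
    have : D i < D j := by nlinarith
    nlinarith
  · have : 1 - exp t ≤ 0 := sub_nonpos.2 (Real.one_le_exp_iff.2 ht)
    have : D j < D i := by nlinarith
    nlinarith

lemma card_filter_le_exp_neg_mul_sum_exp {α : Type*} [Fintype α] (p : α → Prop)
    [DecidablePred p] (g : α → ℝ) (s : ℝ) (h : ∀ x, p x → s ≤ g x) :
    (#{x | p x} : ℝ) ≤ exp (-s) * ∑ x, exp (g x) := by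
  rw [card_filter, Nat.cast_sum, mul_sum]
  refine sum_le_sum fun x _ => ?_
  split_ifs with hx
  · rw [Nat.cast_one, ← Real.exp_add, Real.one_le_exp_iff]
    linarith [h x hx]
  · simp only [Nat.cast_zero]
    positivity

lemma factorial_mul_stirlingSecond_eq_sum (k j : ℕ) :
    (j.factorial * Nat.stirlingSecond k j : ℝ) =
      ∑ i ∈ range (j + 1), (-1 : ℝ) ^ i * (j.choose i : ℝ) * ((j - i : ℕ) : ℝ) ^ k := by
  induction k generalizing j with
  | zero =>
    have := congrArg (Int.cast : ℤ → ℝ) (Int.alternating_sum_range_choose (n := j))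
    push_cast at this
    cases j <;> simp_all
  | succ k ih =>
    cases j with
    | zero => simp
    | succ m =>
      have hterm : ∀ i ∈ range (m + 1),
          (-1 : ℝ) ^ (i + 1) * ((m + 1).choose (i + 1) : ℝ) * ((m - i : ℕ) : ℝ) ^ (k + 1) =
            (m + 1) * ((-1 : ℝ) ^ (i + 1) * ((m + 1).choose (i + 1) : ℝ) * ((m - i : ℕ) : ℝ) ^ k) +
            (m + 1) * ((-1 : ℝ) ^ i * (m.choose i : ℝ) * ((m - i : ℕ) : ℝ) ^ k) := by
        intro i hi
        have hchoose : ((m + 1 : ℕ) * m.choose i : ℝ) = (m + 1).choose (i + 1) * (i + 1 : ℕ) := by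
          exact_mod_cast Nat.add_one_mul_choose_eq m i
        rw [Nat.cast_sub (Nat.lt_succ_iff.1 (mem_range.1 hi))]
        push_cast at hchoose ⊢
        linear_combination -((-1 : ℝ) ^ i * ((m : ℝ) - i) ^ k) * hchoose
      have hsucc := ih (m + 1)
      rw [sum_range_succ'] at hsucc ⊢
      simp only [Nat.add_sub_add_right] at hsucc ⊢
      rw [sum_congr rfl hterm, sum_add_distrib, ← mul_sum, ← mul_sum, ← ih m,
        Nat.stirlingSecond_succ_succ]
      rw [Nat.factorial_succ] at hsucc ⊢
      push_cast at hsucc ⊢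
      linear_combination (m + 1 : ℝ) * hsucc

lemma one_sub_inv_pow_le_exp_neg_one {n : ℕ} (hn : n ≠ 0) :
    (1 - (n : ℝ)⁻¹) ^ n ≤ exp (-1) := by
  simpa only [one_div] using
    one_sub_div_pow_le_exp_neg (t := 1) (Nat.one_le_cast.2 (Nat.one_le_iff_ne_zero.2 hn))

lemma exp_neg_one_mul_le_one_sub_inv_pow (n : ℕ) :
    exp (-1) * (1 - (n : ℝ)⁻¹) ≤ (1 - (n : ℝ)⁻¹) ^ n := by
  cases n with
  | zero => simp
  | succ m =>
    have hinv : (1 - ((m + 1 : ℕ) : ℝ)⁻¹) ^ m = ((1 + (m : ℝ)⁻¹) ^ m)⁻¹ := by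
      rcases eq_or_ne m 0 with rfl | hm
      · simp
      · rw [← inv_pow]
        congr 1
        field_simp
        push_cast
        ring
    have hq : 0 ≤ 1 - ((m + 1 : ℕ) : ℝ)⁻¹ := sub_nonneg.2 (inv_le_one_of_one_le₀ (by simp))
    rw [pow_succ, hinv, Real.exp_neg]
    exact mul_le_mul_of_nonneg_right
      (inv_anti₀ (by positivity) Real.one_add_inv_pow_le_exp) hq

/-- A threshold `θ * N` is written `(μ + 2 * t) * N`, i.e. the Chernoff parameter is
`t = (θ - μ) / 2`; `m` is the mean, equal to `μ * N` up to `1`. -/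
lemma chernoff_exponent_le {t μ m N : ℝ} (ht : |t| ≤ 1) (hμ₀ : 0 ≤ μ) (hμ₁ : μ ≤ 1)
    (hN : 0 ≤ N) (hm : μ * N ≤ m) (hm' : m ≤ μ * N + 1) :
    -(t * ((μ + 2 * t) * N)) + (exp t - 1) * m ≤ 2 - t ^ 2 * N := by
  have hquad := abs_le.1 (Real.abs_exp_sub_one_sub_id_le ht)
  have ht' := abs_le.1 ht
  have hμN : 0 ≤ μ * N := mul_nonneg hμ₀ hN
  have hmean : (exp t - 1) * (μ * N) ≤ (t + t ^ 2) * (μ * N) :=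
    mul_le_mul_of_nonneg_right (by linarith) hμN
  have hexcess : (exp t - 1) * (m - μ * N) ≤ 2 := by
    nlinarith
  nlinarith [mul_le_mul_of_nonneg_right hμ₁ (mul_nonneg hN (sq_nonneg t))]

section ImageCard

variable {β : Type*} [DecidableEq β]

def imageCard {α : Type*} [Fintype α] (f : α → β) : ℕ := #(univ.image f)

lemma imageCard_le_card [Fintype β] {α : Type*} [Fintype α] (f : α → β) :
    imageCard f ≤ Fintype.card β :=
  card_le_univ _

@[simp]
lemma imageCard_of_isEmpty {α : Type*} [Fintype α] [IsEmpty α] (f : α → β) : imageCard f = 0 := by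
  simp [imageCard]

lemma imageCard_pos {α : Type*} [Fintype α] [Nonempty α] (f : α → β) : 0 < imageCard f :=
  card_pos.2 (univ_nonempty.image f)

lemma imageCard_cons {k : ℕ} (v : β) (g : Fin k → β) :
    imageCard (Fin.cons v g : Fin (k + 1) → β) =
      if v ∈ univ.image g then imageCard g else imageCard g + 1 := by
  have : univ.image (Fin.cons v g : Fin (k + 1) → β) = insert v (univ.image g) := by
    ext x; simp [Fin.exists_fin_succ, eq_comm]
  split_ifs with hv
  · rw [imageCard, this, insert_eq_of_mem hv, imageCard]
  · rw [imageCard, this, card_insert_of_notMem hv, imageCard]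

/-- Of the `card β` letters that can be appended to `g`, the `imageCard g` that already occur in
`g` keep the number of distinct letters and the others raise it by one. -/
lemma sum_imageCard_fin_succ [Fintype β] {M : Type*} [AddCommMonoid M] {k : ℕ} (φ : ℕ → M) :
    ∑ f : Fin (k + 1) → β, φ (imageCard f) =
      ∑ g : Fin k → β, (imageCard g • φ (imageCard g) +
        (Fintype.card β - imageCard g) • φ (imageCard g + 1)) := by
  rw [sum_fin_succ_fun]
  refine sum_congr rfl fun g _ => ?_
  simp only [imageCard_cons, apply_ite φ]
  rw [← sum_add_sum_compl (univ.image g), sum_congr rfl fun v hv => if_pos hv,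
    sum_congr rfl fun v hv => if_neg (mem_compl.1 hv), sum_const, sum_const, card_compl]
  rfl

lemma card_imageCard_eq [Fintype β] (k j : ℕ) :
    #{f : Fin k → β | imageCard f = j} =
      (Fintype.card β).descFactorial j * Nat.stirlingSecond k j := by
  induction k generalizing j with
  | zero => cases j <;> simp [eq_comm]
  | succ k ih =>
    cases j with
    | zero => simp [(imageCard_pos _).ne']
    | succ m =>
      have hstep : ∀ g : Fin k → β,
          imageCard g • (if imageCard g = m + 1 then 1 else 0) +
            (Fintype.card β - imageCard g) • (if imageCard g + 1 = m + 1 then 1 else 0) =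
          (m + 1) * (if imageCard g = m + 1 then 1 else 0) +
            (Fintype.card β - m) * (if imageCard g = m then 1 else 0) := by
        intro g
        by_cases h₁ : imageCard g = m + 1 <;> by_cases h₂ : imageCard g = m <;> simp_all
      rw [card_filter, sum_imageCard_fin_succ fun d => if d = m + 1 then 1 else 0]
      rw [sum_congr rfl fun g _ => hstep g, sum_add_distrib,
        ← mul_sum, ← mul_sum, ← card_filter, ← card_filter, ih, ih, Nat.stirlingSecond_succ_succ,
        Nat.descFactorial_succ]
      ring

variable [Fintype β]

lemma sum_imageCard_fin_succ_real {k : ℕ} (φ : ℕ → ℝ) :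
    ∑ f : Fin (k + 1) → β, φ (imageCard f) =
      ∑ g : Fin k → β, (imageCard g * φ (imageCard g) +
        (Fintype.card β - imageCard g) * φ (imageCard g + 1)) := by
  rw [sum_imageCard_fin_succ]
  refine sum_congr rfl fun g _ => ?_
  rw [nsmul_eq_mul, nsmul_eq_mul, Nat.cast_sub (imageCard_le_card g)]

lemma sum_imageCard (k : ℕ) :
    ∑ f : Fin k → β, (imageCard f : ℝ) =
      (Fintype.card β : ℝ) ^ (k + 1) - Fintype.card β * (Fintype.card β - 1) ^ k := by
  induction k with
  | zero => simp
  | succ k ih =>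
    rw [sum_imageCard_fin_succ_real Nat.cast]
    have : ∀ g : Fin k → β, (imageCard g * (imageCard g : ℝ) +
        (Fintype.card β - imageCard g) * ((imageCard g + 1 : ℕ) : ℝ)) =
          (Fintype.card β - 1) * imageCard g + Fintype.card β := by
      intro g; push_cast; ring
    rw [sum_congr rfl fun g _ => this g, sum_add_distrib, ← mul_sum, ih, sum_const, card_univ,
      Fintype.card_fun, Fintype.card_fin, nsmul_eq_mul]
    push_cast
    ring

lemma sum_exp_imageCard_fin_succ (k : ℕ) (t : ℝ) :
    ∑ f : Fin (k + 1) → β, exp (t * imageCard f) =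
      ∑ g : Fin k → β, exp (t * imageCard g) *
        (Fintype.card β * exp t + (1 - exp t) * imageCard g) := by
  rw [sum_imageCard_fin_succ_real fun d => exp (t * d)]
  refine sum_congr rfl fun g _ => ?_
  rw [Nat.cast_succ, mul_add_one, Real.exp_add]
  ring

/-- Chebyshev's sum inequality, applied to the antivarying `exp (t * imageCard g)` and
`card β * exp t + (1 - exp t) * imageCard g`. -/
lemma sum_exp_imageCard_fin_succ_le (k : ℕ) (t : ℝ) :
    (Fintype.card β : ℝ) ^ k * ∑ f : Fin (k + 1) → β, exp (t * imageCard f) ≤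
      (∑ g : Fin k → β, exp (t * imageCard g)) *
        ((Fintype.card β : ℝ) ^ (k + 1) +
          (exp t - 1) * Fintype.card β * (Fintype.card β - 1) ^ k) := by
  have hcheb := (antivary_exp_mul (fun g : Fin k → β => (imageCard g : ℝ)) t
    (Fintype.card β * exp t)).card_mul_sum_le_sum_mul_sum
  rw [Fintype.card_fun, Fintype.card_fin, Nat.cast_pow] at hcheb
  rw [sum_exp_imageCard_fin_succ]
  refine hcheb.trans_eq (congrArg _ ?_)
  rw [sum_add_distrib, ← mul_sum, ← mul_sum, sum_imageCard, sum_const, card_univ, Fintype.card_fun,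
      Fintype.card_fin, nsmul_eq_mul]
  push_cast
  ring

lemma sum_exp_imageCard_le [Nonempty β] (k : ℕ) (t : ℝ) :
    ∑ f : Fin k → β, exp (t * imageCard f) ≤
      (Fintype.card β : ℝ) ^ k * exp ((exp t - 1) * (Fintype.card β *
        (1 - (1 - (Fintype.card β : ℝ)⁻¹) ^ k))) := by
  set n : ℝ := (Fintype.card β : ℝ)
  have hn : 1 ≤ n := Nat.one_le_cast.2 Fintype.card_pos
  have hq : n - 1 = n * (1 - n⁻¹) := by field_simp
  have hq₀ : 0 ≤ 1 - n⁻¹ := sub_nonneg.2 (inv_le_one_of_one_le₀ hn)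
  have hq₁ : 1 - n⁻¹ ≤ 1 := by linarith [inv_nonneg.2 (zero_le_one.trans hn)]
  generalize 1 - n⁻¹ = q at hq hq₀ hq₁ ⊢
  induction k with
  | zero => simp
  | succ k ih =>
    have hfactor : 0 ≤ 1 + (exp t - 1) * q ^ k := by
      nlinarith [Real.exp_pos t, pow_le_one₀ hq₀ hq₁ (n := k), pow_nonneg hq₀ k]
    have hstep := sum_exp_imageCard_fin_succ_le (β := β) k t
    rw [hq, mul_pow] at hstep
    have hrec : ∑ f : Fin (k + 1) → β, exp (t * imageCard f) ≤
        (∑ g : Fin k → β, exp (t * imageCard g)) * (n * (1 + (exp t - 1) * q ^ k)) := by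
      refine le_of_mul_le_mul_left (hstep.trans_eq ?_) (pow_pos (zero_lt_one.trans_le hn) k)
      ring
    calc _ ≤ _ := hrec
      _ ≤ n ^ k * exp ((exp t - 1) * (n * (1 - q ^ k))) *
            (n * exp ((exp t - 1) * q ^ k)) := by
        gcongr
        linarith [Real.add_one_le_exp ((exp t - 1) * q ^ k)]
      _ = _ := by
        rw [mul_mul_mul_comm, ← Real.exp_add, pow_succ]
        congr 2
        linear_combination -(exp t - 1) * q ^ k * hq

end ImageCard

lemma card_imageCard_tail_le {n : ℕ} (hn : n ≠ 0) {t : ℝ} (ht : |t| ≤ 1) (p : ℕ → Prop)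
    [DecidablePred p] (hp : ∀ j : ℕ, p j → t * ((1 - exp (-1) + 2 * t) * n) ≤ t * j) :
    (#{f : Fin n → Fin n | p (imageCard f)} : ℝ) ≤ n ^ n * exp (2 - t ^ 2 * n) := by
  have : Nonempty (Fin n) := ⟨⟨0, Nat.pos_of_ne_zero hn⟩⟩
  have hmgf := sum_exp_imageCard_le (β := Fin n) n t
  rw [Fintype.card_fin] at hmgf
  set m : ℝ := n * (1 - (1 - (n : ℝ)⁻¹) ^ n)
  have hN : (0 : ℝ) ≤ n := n.cast_nonneg
  have he : exp (-1) ≤ 1 := Real.exp_le_one_iff.2 (by norm_num)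
  have hm : (1 - exp (-1)) * n ≤ m := by nlinarith [one_sub_inv_pow_le_exp_neg_one hn]
  have hm' : m ≤ (1 - exp (-1)) * n + 1 := by
    have := exp_neg_one_mul_le_one_sub_inv_pow n
    have : (n : ℝ) * (n : ℝ)⁻¹ = 1 := mul_inv_cancel₀ (Nat.cast_ne_zero.2 hn)
    nlinarith
  calc (#{f : Fin n → Fin n | p (imageCard f)} : ℝ)
      ≤ exp (-(t * ((1 - exp (-1) + 2 * t) * n))) * ∑ f : Fin n → Fin n, exp (t * imageCard f) :=
        card_filter_le_exp_neg_mul_sum_exp _ _ _ fun f hf => hp _ hf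
    _ ≤ exp (-(t * ((1 - exp (-1) + 2 * t) * n))) * (n ^ n * exp ((exp t - 1) * m)) := by
        gcongr
    _ = n ^ n * exp (-(t * ((1 - exp (-1) + 2 * t) * n)) + (exp t - 1) * m) := by
        rw [Real.exp_add]; ring
    _ ≤ n ^ n * exp (2 - t ^ 2 * n) := by
        gcongr
        exact chernoff_exponent_le ht (sub_nonneg.2 he) (by linarith [exp_pos (-1)]) hN hm hm'

lemma a_eq_card (n j : ℕ) : a n j = #{f : Fin n → Fin n | imageCard f = j} := by
  rw [card_imageCard_eq, Fintype.card_fin, Nat.descFactorial_eq_factorial_mul_choose, a, stirling2]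
  push_cast
  rw [← factorial_mul_stirlingSecond_eq_sum]
  field_simp

lemma sum_filter_a_le_card (n : ℕ) (p : ℕ → Prop) [DecidablePred p] :
    ∑ j ∈ (Icc 1 n).filter p, a n j ≤ #{f : Fin n → Fin n | p (imageCard f)} := by
  simp_rw [a_eq_card]
  rw [← Nat.cast_sum, sum_card_fiberwise_eq_card_filter, Nat.cast_le]
  refine card_le_card fun f hf => ?_
  simp only [mem_filter, mem_univ, true_and] at hf ⊢
  exact hf.2

lemma a_nonneg (n j : ℕ) : 0 ≤ a n j := by
  rw [a_eq_card]
  exact Nat.cast_nonneg _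

lemma sum_filter_a_le {n : ℕ} (hn : n ≠ 0) {t : ℝ} (ht : |t| ≤ 1) (p : ℕ → Prop)
    [DecidablePred p] (hp : ∀ j : ℕ, p j → t * ((1 - exp (-1) + 2 * t) * n) ≤ t * j) :
    ∑ j ∈ (Icc 1 n).filter p, a n j ≤ n ^ n * exp (2 - t ^ 2 * n) :=
  (sum_filter_a_le_card n p).trans (card_imageCard_tail_le hn ht p hp)

theorem stmt_3 (ε : ℝ) (hε0 : 0 < ε) (hε1 : ε < 1) :
    Summable (fun n : ℕ => (n : ℝ) ^ (-(n : ℝ)) *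
      ((∑ j ∈ (Finset.Icc 1 n).filter
          (fun j : ℕ => (j : ℝ) ≤ (1 - 1 / Real.exp 1 - ε) * n), a n j) +
       (∑ j ∈ (Finset.Icc 1 n).filter
          (fun j : ℕ => (1 - 1 / Real.exp 1 + ε) * n ≤ (j : ℝ)), a n j))) := by
  simp only [one_div, ← Real.exp_neg]
  have ht : |ε / 2| ≤ 1 := by rw [abs_of_pos (by positivity)]; linarith
  have hgeom : Summable fun n : ℕ => 2 * exp 2 * exp (-(ε / 2) ^ 2) ^ n :=
    (summable_geometric_of_lt_one (Real.exp_pos _).le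
      (Real.exp_lt_one_iff.2 (by nlinarith))).mul_left _
  refine hgeom.of_nonneg_of_le (fun n => ?_) (fun n => ?_)
  · exact mul_nonneg (rpow_nonneg n.cast_nonneg _)
      (add_nonneg (sum_nonneg fun j _ => a_nonneg n j) (sum_nonneg fun j _ => a_nonneg n j))
  rcases eq_or_ne n 0 with rfl | hn
  · simp only [Icc_eq_empty_of_lt zero_lt_one, filter_empty, sum_empty, add_zero, mul_zero]
    positivity
  have hpow : (n : ℝ) ^ (-(n : ℝ)) * n ^ n = 1 := by
    rw [Real.rpow_neg n.cast_nonneg, Real.rpow_natCast, inv_mul_cancel₀ (by positivity)]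
  calc
    _ ≤ (n : ℝ) ^ (-(n : ℝ)) * (n ^ n * exp (2 - (-(ε / 2)) ^ 2 * n) +
          n ^ n * exp (2 - (ε / 2) ^ 2 * n)) := by
      gcongr
      · exact sum_filter_a_le hn (by rwa [abs_neg]) _ fun j hj =>
          mul_le_mul_of_nonpos_left (by linear_combination hj) (by linarith)
      · exact sum_filter_a_le hn ht _ fun j hj =>
          mul_le_mul_of_nonneg_left (by linear_combination hj) (by linarith)
    _ = 2 * exp 2 * exp (-(ε / 2) ^ 2) ^ n := by
      have hexp : exp (2 - (ε / 2) ^ 2 * n) = exp 2 * exp (-(ε / 2) ^ 2) ^ n := by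
        rw [← Real.exp_nat_mul, ← Real.exp_add]
        ring_nf
      rw [neg_sq, hexp]
      linear_combination (2 * exp 2 * exp (-(ε / 2) ^ 2) ^ n) * hpow
end

section
/- For every pair of integers n, j with n ≥ 2 and 1 ≤ j ≤ n−1, the binomial coefficient satisfies (1/(2√n))·varphi(j/n)^n ≤ C(n,j) ≤ varphi(j/n)^n. -/
noncomputable def varphi (x : ℝ) : ℝ := x ^ (-x) * (1 - x) ^ (-(1 - x))

/-!
Writing `n = j + k`, one has `varphi (j / n) ^ n = n ^ n / (j ^ j * k ^ k)`. The upper bound is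
then the fact that `C(n, j) * j ^ j * k ^ k` is one term of the binomial expansion of `(j + k) ^ n`.
For the lower bound, write `C(n, j) = n! / (j! * k!)` and use Stirling's bounds
`√(2πm) (m/e)^m ≤ m! ≤ e √m (m/e)^m` (the upper one because the Stirling sequence decreases from
`e / √2`). The powers of `e` cancel, and what is left is `e² √(jk) ≤ 2 √(2π) n`, which follows from
`2 √(jk) ≤ n` and `e² ≤ 4 √(2π)`.
-/

open Real Nat

lemma choose_mul_pow_mul_pow_le (j k : ℕ) :
    (j + k).choose j * (j ^ j * k ^ k) ≤ (j + k) ^ (j + k) := by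
  rw [add_pow]
  calc _ = j ^ j * k ^ (j + k - j) * ((j + k).choose j : ℕ) := by rw [Nat.add_sub_cancel_left]; ring
    _ ≤ _ := Finset.single_le_sum (f := fun m => j ^ m * k ^ (j + k - m) * ((j + k).choose m : ℕ))
        (fun _ _ => Nat.zero_le _) (Finset.mem_range.2 (by omega))

lemma factorial_le_exp_one_mul_sqrt_mul {m : ℕ} (hm : m ≠ 0) :
    (m ! : ℝ) ≤ exp 1 * (√m * (m / exp 1) ^ m) := by
  obtain ⟨i, rfl⟩ := Nat.exists_eq_succ_of_ne_zero hm
  have h : Stirling.stirlingSeq (i + 1) ≤ exp 1 / √2 :=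
    Stirling.stirlingSeq_one ▸ Stirling.stirlingSeq'_antitone (Nat.zero_le i)
  rw [Stirling.stirlingSeq, div_le_iff₀ (by positivity)] at h
  calc _ ≤ _ := h
    _ = _ := by rw [sqrt_mul zero_le_two]; field_simp

lemma exp_one_sq_le_four_mul_sqrt_two_pi : exp 1 ^ 2 ≤ 4 * √(2 * π) := by
  have he : exp 1 < 3 := exp_one_lt_d9.trans (by norm_num)
  have hs : 9 / 4 ≤ √(2 * π) :=
    (le_sqrt (by norm_num) (by positivity)).2 (by nlinarith [pi_gt_three])
  nlinarith [exp_pos 1]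

lemma varphi_div_add_pow (j k : ℕ) (hjk : j + k ≠ 0) :
    varphi (j / (j + k)) ^ (j + k) = ((j + k) ^ (j + k) / (j ^ j * k ^ k) : ℝ) := by
  have hn : (j + k : ℝ) ≠ 0 := by exact_mod_cast hjk
  have rpow_neg_self_pow (y : ℝ) (hy : 0 ≤ y) (m : ℕ) (hm : y * (j + k : ℕ) = m) :
      (y ^ (-y)) ^ (j + k) = (y ^ m)⁻¹ := by
    rw [← rpow_natCast, ← rpow_mul hy, neg_mul, hm, rpow_neg hy, rpow_natCast]
  have h1x : 1 - j / (j + k : ℝ) = k / (j + k) := by field_simp; ring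
  rw [varphi, mul_pow, rpow_neg_self_pow _ (by positivity) j (by push_cast; field_simp), h1x,
    rpow_neg_self_pow _ (by positivity) k (by push_cast; field_simp), div_pow, div_pow, pow_add]
  field_simp

lemma one_div_two_mul_sqrt_mul_pow_div_le_choose {j k : ℕ} (hj : j ≠ 0) (hk : k ≠ 0) :
    1 / (2 * √(j + k)) * ((j + k) ^ (j + k) / (j ^ j * k ^ k)) ≤ ((j + k).choose j : ℝ) := by
  have hj' : (0 : ℝ) < j := by positivity
  have hk' : (0 : ℝ) < k := by positivity
  set n : ℝ := j + k
  have he := exp_pos 1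
  have hratio : n ^ (j + k) / (j ^ j * k ^ k) =
      (n / exp 1) ^ (j + k) / ((j / exp 1) ^ j * (k / exp 1) ^ k) := by
    simp only [div_pow, pow_add]; field_simp
  have hamgm : 2 * (√j * √k) ≤ n := by
    nlinarith [two_mul_le_add_sq (√j) (√k), sq_sqrt hj'.le, sq_sqrt hk'.le]
  have hconst : 1 / (2 * √n) ≤ √(2 * π * n) / (exp 1 * √j * (exp 1 * √k)) := by
    rw [div_le_div_iff₀ (by positivity) (by positivity), sqrt_mul (by positivity)]
    have := sq_sqrt (show 0 ≤ n by positivity)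
    nlinarith [exp_one_sq_le_four_mul_sqrt_two_pi, sqrt_nonneg (2 * π), sqrt_nonneg j, sqrt_nonneg k]
  have hstirling := Stirling.le_factorial_stirling (j + k)
  push_cast at hstirling
  rw [hratio, Nat.cast_add_choose]
  calc _ ≤ √(2 * π * n) / (exp 1 * √j * (exp 1 * √k)) *
        ((n / exp 1) ^ (j + k) / ((j / exp 1) ^ j * (k / exp 1) ^ k)) := by gcongr
    _ = √(2 * π * n) * (n / exp 1) ^ (j + k) /
        ((exp 1 * (√j * (j / exp 1) ^ j)) * (exp 1 * (√k * (k / exp 1) ^ k))) := by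
      field_simp
    _ ≤ _ := by
      gcongr
      · exact factorial_le_exp_one_mul_sqrt_mul hj
      · exact factorial_le_exp_one_mul_sqrt_mul hk

theorem stmt_6_general (n j : ℕ) (hj1 : 1 ≤ j) (hj2 : j ≤ n - 1) :
    (1 / (2 * Real.sqrt n)) * varphi ((j : ℝ) / n) ^ n ≤ (Nat.choose n j : ℝ) ∧
    (Nat.choose n j : ℝ) ≤ varphi ((j : ℝ) / n) ^ n := by
  obtain ⟨k, hk, rfl⟩ : ∃ k, k ≠ 0 ∧ n = j + k := ⟨n - j, by omega, by omega⟩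
  have hj : j ≠ 0 := Nat.one_le_iff_ne_zero.1 hj1
  push_cast
  rw [varphi_div_add_pow j k (by omega)]
  refine ⟨one_div_two_mul_sqrt_mul_pow_div_le_choose hj hk, ?_⟩
  rw [le_div_iff₀ (by positivity)]
  exact_mod_cast choose_mul_pow_mul_pow_le j k

theorem stmt_6 (n j : ℕ) (hn : 2 ≤ n) (hj1 : 1 ≤ j) (hj2 : j ≤ n - 1) :
    (1 / (2 * Real.sqrt n)) * varphi ((j : ℝ) / n) ^ n ≤ (Nat.choose n j : ℝ) ∧
    (Nat.choose n j : ℝ) ≤ varphi ((j : ℝ) / n) ^ n :=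
  stmt_6_general n j hj1 hj2
end

section
/- For every pair of integers n, j with n ≥ 3 and 1 ≤ j ≤ n−2, one has (e^{−2}/(4n³))·(n^{1−j/n}·κ(j/n))^n ≤ A5(n,j) ≤ 2·(n^{1−j/n}·κ(j/n))^n. -/
noncomputable def mu5 (n j : ℕ) : ℝ :=
  ((n - j).choose 2 : ℝ) * (Nat.choose n 3 : ℝ) / ((Nat.choose n 2).choose 2 : ℝ)

noncomputable def d5 (n j : ℕ) : ℝ :=
  let N : ℝ := (Nat.choose n 2 : ℝ)
  let m : ℝ := ((n - j : ℕ) : ℝ)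
  let CN2 : ℝ := ((Nat.choose n 2).choose 2 : ℝ)
  let P : ℝ := 2 * (Nat.choose n 3 : ℝ) / CN2
  let Q : ℝ := (13 - 12 * m + 3 * m ^ 2) / CN2
  let R : ℝ := 8 * (Nat.choose n 3 : ℝ) / CN2
  let S : ℝ := 6 * (Nat.choose n 4 : ℝ) / ((Nat.choose n 3 : ℝ) * (N - 2))
  let T : ℝ := (5 * (n : ℝ) - 11) / (4 * (N - 2))
  P + Q + (1 - Q) * (m - 2) * (R + S + T)

noncomputable def D5 (n j : ℕ) : ℝ :=
  min (d5 n j) (min (2 * mu5 n j * d5 n j) 1)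

noncomputable def kappa (x : ℝ) : ℝ := (Real.exp 1 / 2) ^ (1 - x) * (1 - x) ^ (-(1 - x))

noncomputable def A5 (n j : ℕ) : ℝ :=
  ((Nat.choose n 2).choose (n - j) : ℝ) *
    Real.exp (-(2 * mu5 n j)) * (1 + Real.exp (2 * mu5 n j) * D5 n j)

/-!
Write `m = n - j` and `N = C(n,2)`. The base `n ^ (1 - j/n) * κ(j/n)` is the `n`-th root of
`(e n² / (2m)) ^ m`, and `A5 n j = C(N,m) w` with weight `w = e^(-2μ5) + D5`.

Upper bound: `μ5 ≥ 0` and `D5 ≤ 1` give `w ≤ 2`, and `C(N,m) ≤ (e N / m) ^ m`.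

Lower bound: `d5 ≥ P = 8 / (3(n+1))`, so splitting on whether `2μ5 ≤ 1` gives `w ≥ e⁻¹ P`.
Stirling (`m! ≤ e m (m/e)^m`) with `C(N,m) ≥ (N+1-m)^m / m!` gives
`C(N,m) ≥ (e n² / (2m))^m r^m / (e m)`, where `N + 1 - m = r n² / 2`; and
`r^m = (1 + q)^(-m) ≥ e^(-mq) ≥ 1/32` since `m q ≤ 16/5`.
-/

open Real
open scoped Nat

theorem factorial_le_exp_one_mul_mul_pow {m : ℕ} (hm : m ≠ 0) :
    (m ! : ℝ) ≤ exp 1 * m * (m / exp 1) ^ m := by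
  have hseq : Stirling.stirlingSeq m ≤ exp 1 / √2 := by
    obtain ⟨k, rfl⟩ := Nat.exists_eq_succ_of_ne_zero hm
    rw [← Stirling.stirlingSeq_one]
    exact Stirling.stirlingSeq'_antitone (Nat.zero_le k)
  have hm1 : (1 : ℝ) ≤ m := mod_cast Nat.one_le_iff_ne_zero.mpr hm
  rw [Stirling.stirlingSeq, div_le_iff₀ (by positivity)] at hseq
  have hsqrt : exp 1 / √2 * √(2 * m) = exp 1 * √m := by
    rw [Real.sqrt_mul zero_le_two]; field_simp
  calc (m ! : ℝ) ≤ exp 1 * √m * (m / exp 1) ^ m := by rwa [← hsqrt, mul_assoc]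
    _ ≤ exp 1 * m * (m / exp 1) ^ m := by
      gcongr
      exact Real.sqrt_le_self_iff.mpr (Or.inr hm1)

theorem choose_le_exp_one_mul_div_pow (N m : ℕ) : (N.choose m : ℝ) ≤ (exp 1 * N / m) ^ m := by
  rcases Nat.eq_zero_or_pos m with rfl | hm
  · simp
  have hm' : (0 : ℝ) < m := mod_cast hm
  calc (N.choose m : ℝ) ≤ N ^ m / m ! := Nat.choose_le_pow_div m N
    _ = (N / m) ^ m * ((m : ℝ) ^ m / m !) := by rw [div_pow]; field_simp
    _ ≤ (N / m) ^ m * exp m := by gcongr; exact pow_div_factorial_le_exp _ m.cast_nonneg m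
    _ = (exp 1 * N / m) ^ m := by rw [← exp_one_pow, ← mul_pow]; ring

theorem exp_one_mul_div_pow_div_le_choose {N m : ℕ} (hm : m ≠ 0) :
    (exp 1 * (N + 1 - m : ℕ) / m) ^ m / (exp 1 * m) ≤ N.choose m := by
  refine le_trans ?_ (Nat.pow_le_choose m N)
  have hm' : (0 : ℝ) < m := by positivity
  calc (exp 1 * (N + 1 - m : ℕ) / m) ^ m / (exp 1 * m)
      = ((N + 1 - m : ℕ) : ℝ) ^ m / (exp 1 * m * (m / exp 1) ^ m) := by
        simp only [div_pow, mul_pow]; field_simp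
    _ ≤ ((N + 1 - m : ℕ) : ℝ) ^ m / m ! := by
        gcongr
        exact factorial_le_exp_one_mul_mul_pow hm

theorem exp_one_mul_le_exp_neg_add_min {x p d : ℝ} (hx : 0 ≤ x) (hp : 0 ≤ p) (hp1 : p ≤ 1)
    (hpd : p ≤ d) : exp (-1) * p ≤ exp (-x) + min d (min (x * d) 1) := by
  have he1 : exp (-1) ≤ 1 := exp_le_one_iff.mpr (by norm_num)
  rcases le_or_gt x 1 with h | h
  · have : 0 ≤ min d (min (x * d) 1) := le_min (hp.trans hpd) (le_min (by nlinarith) zero_le_one)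
    have : exp (-1) ≤ exp (-x) := exp_le_exp.mpr (by linarith)
    nlinarith [exp_pos (-1)]
  · have : p ≤ min d (min (x * d) 1) := le_min hpd (le_min (by nlinarith) hp1)
    nlinarith [exp_pos (-x)]

theorem A5_eq (n j : ℕ) :
    A5 n j = ((n.choose 2).choose (n - j) : ℝ) * (exp (-(2 * mu5 n j)) + D5 n j) := by
  rw [A5, mul_assoc, mul_add, mul_one, ← mul_assoc (exp _), ← exp_add, neg_add_cancel, exp_zero,
    one_mul]

theorem mu5_nonneg (n j : ℕ) : 0 ≤ mu5 n j := by
  unfold mu5; positivity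

theorem D5_le_one (n j : ℕ) : D5 n j ≤ 1 :=
  (min_le_right _ _).trans (min_le_right _ _)

theorem A5_le (n j : ℕ) : A5 n j ≤ 2 * (exp 1 * n ^ 2 / (2 * (n - j : ℕ))) ^ (n - j) := by
  have hexp : exp (-(2 * mu5 n j)) ≤ 1 :=
    exp_le_one_iff.mpr (by linarith [mu5_nonneg n j])
  have hN : (n.choose 2 : ℝ) ≤ n ^ 2 / 2 := by
    rw [Nat.cast_choose_two]; linarith [n.cast_nonneg (α := ℝ)]
  calc A5 n j ≤ ((n.choose 2).choose (n - j) : ℝ) * 2 := by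
        rw [A5_eq]; gcongr; linarith [D5_le_one n j]
    _ ≤ (exp 1 * (n.choose 2 : ℕ) / (n - j : ℕ)) ^ (n - j) * 2 := by
        gcongr; exact choose_le_exp_one_mul_div_pow _ _
    _ ≤ (exp 1 * (n ^ 2 / 2) / (n - j : ℕ)) ^ (n - j) * 2 := by gcongr
    _ = 2 * (exp 1 * n ^ 2 / (2 * (n - j : ℕ))) ^ (n - j) := by ring

theorem cast_choose_three (n : ℕ) : (n.choose 3 : ℝ) = n * (n - 1) * (n - 2) / 6 := by
  rw [Nat.cast_choose_eq_descPochhammer_div]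
  simp only [descPochhammer_succ_eval, descPochhammer_one, Polynomial.eval_X, Nat.cast_one,
    Nat.cast_ofNat, Nat.factorial, Nat.succ_eq_add_one, Nat.reduceAdd, zero_add, mul_one,
    Nat.reduceMul]

theorem cast_choose_choose_two (n : ℕ) :
    ((n.choose 2).choose 2 : ℝ) = n * (n - 1) * (n - 2) * (n + 1) / 8 := by
  rw [Nat.cast_choose_two, Nat.cast_choose_two]; ring

theorem le_d5 {n j : ℕ} (hn : 3 ≤ n) (hj1 : 1 ≤ j) (hj2 : j + 2 ≤ n) :
    8 / (3 * (n + 1)) ≤ d5 n j := by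
  have hn3 : (3 : ℝ) ≤ n := mod_cast hn
  have hm2 : (2 : ℝ) ≤ (n - j : ℕ) := mod_cast (by omega : 2 ≤ n - j)
  have hmn : ((n - j : ℕ) : ℝ) + 1 ≤ n := mod_cast (by omega : n - j + 1 ≤ n)
  have hCN2 : 0 < ((n.choose 2).choose 2 : ℝ) := by
    rw [cast_choose_choose_two]
    have : (0 : ℝ) < n - 1 := by linarith
    have : (0 : ℝ) < n - 2 := by linarith
    positivity
  have hP : 2 * (n.choose 3 : ℝ) / ((n.choose 2).choose 2 : ℝ) = 8 / (3 * (n + 1)) := by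
    rw [cast_choose_three, cast_choose_choose_two]
    have : (n : ℝ) - 1 ≠ 0 := by linarith
    have : (n : ℝ) - 2 ≠ 0 := by linarith
    field_simp
    ring
  dsimp only [d5]
  rw [hP]
  set m : ℝ := ((n - j : ℕ) : ℝ)
  set Q := (13 - 12 * m + 3 * m ^ 2) / ((n.choose 2).choose 2 : ℝ)
  have hQ0 : 0 ≤ Q := div_nonneg (by nlinarith) hCN2.le
  have hQ1 : Q ≤ 1 := by
    rw [div_le_one hCN2, cast_choose_choose_two]
    nlinarith [mul_nonneg (by linarith : (0:ℝ) ≤ n - 1 - m) (by linarith : (0:ℝ) ≤ m - 2),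
      mul_nonneg (by linarith : (0:ℝ) ≤ n - 3) (by linarith : (0:ℝ) ≤ m - 2),
      mul_nonneg (by linarith : (0:ℝ) ≤ n - 1 - m) (by linarith : (0:ℝ) ≤ n - 3)]
  have hRST : 0 ≤ 8 * (n.choose 3 : ℝ) / ((n.choose 2).choose 2 : ℝ)
      + 6 * (n.choose 4 : ℝ) / ((n.choose 3 : ℝ) * ((n.choose 2 : ℝ) - 2))
      + (5 * (n : ℝ) - 11) / (4 * ((n.choose 2 : ℝ) - 2)) := by
    have : (0 : ℝ) ≤ 5 * n - 11 := by linarith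
    have : (0 : ℝ) < n.choose 2 - 2 := by rw [Nat.cast_choose_two]; nlinarith
    positivity
  have := mul_nonneg (mul_nonneg (sub_nonneg.mpr hQ1) (sub_nonneg.mpr hm2)) hRST
  linarith

theorem kappa_one_sub {y : ℝ} (hy : 0 < y) : kappa (1 - y) = (exp 1 / (2 * y)) ^ y := by
  rw [kappa, sub_sub_cancel, rpow_neg hy.le, ← inv_rpow hy.le,
    ← mul_rpow (by positivity) (by positivity)]
  congr 1
  field_simp

theorem rpow_mul_kappa_pow {n j : ℕ} (hj : j < n) :
    ((n : ℝ) ^ (1 - (j : ℝ) / n) * kappa ((j : ℝ) / n)) ^ n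
      = (exp 1 * n ^ 2 / (2 * (n - j : ℕ))) ^ (n - j) := by
  have hn : (0 : ℝ) < n := mod_cast (j.zero_le.trans_lt hj)
  have hm : (0 : ℝ) < (n - j : ℕ) := mod_cast Nat.sub_pos_of_lt hj
  have hx : (j : ℝ) / n = 1 - (n - j : ℕ) / n := by
    rw [Nat.cast_sub hj.le]; field_simp; ring
  rw [hx, sub_sub_cancel, kappa_one_sub (by positivity), ← mul_rpow hn.le (by positivity),
    ← rpow_natCast, ← rpow_mul (by positivity), div_mul_cancel₀ _ hn.ne', rpow_natCast]
  congr 1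
  field_simp

theorem exp_sixteen_div_five_le : exp (16 / 5) ≤ 32 := by
  have h : exp (16 / 5) ^ 5 = exp 1 ^ 16 := by rw [← exp_nat_mul, exp_one_pow]; norm_num
  refine (pow_le_pow_iff_left₀ (exp_pos _).le (by norm_num) (by norm_num : 5 ≠ 0)).mp ?_
  calc exp (16 / 5) ^ 5 = exp 1 ^ 16 := h
    _ ≤ 2.7182818286 ^ 16 := by gcongr; exact exp_one_lt_d9.le
    _ ≤ 32 ^ 5 := by norm_num

theorem three_mul_div_le_pow {n m : ℕ} (hn : 3 ≤ n) (hmn : m + 1 ≤ n) :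
    3 * (n + 1) * m / (32 * n ^ 3) ≤ (((n : ℝ) ^ 2 - n - 2 * m + 2) / n ^ 2) ^ m := by
  have hn3 : (3 : ℝ) ≤ n := mod_cast hn
  have hmn' : (m : ℝ) + 1 ≤ n := mod_cast hmn
  have hm0 : (0 : ℝ) ≤ m := m.cast_nonneg
  have hs : 0 < (n : ℝ) ^ 2 - n - 2 * m + 2 := by nlinarith
  set q := ((n : ℝ) + 2 * m - 2) / ((n : ℝ) ^ 2 - n - 2 * m + 2)
  have hq : 0 ≤ q := div_nonneg (by linarith) hs.le
  have hmq : m * q ≤ 16 / 5 := by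
    rw [mul_div_assoc', div_le_iff₀ hs]
    nlinarith [mul_nonneg hm0 (by linarith : (0 : ℝ) ≤ n - 1 - m), sq_nonneg ((2 : ℝ) * n - 13)]
  have hr : ((n : ℝ) ^ 2 - n - 2 * m + 2) / n ^ 2 = (1 + q)⁻¹ := by
    rw [← inv_div, one_add_div hs.ne']
    congr 1
    ring
  have hpow : (1 + q) ^ m ≤ 32 :=
    calc (1 + q) ^ m ≤ exp q ^ m := by gcongr; linarith [add_one_le_exp q]
      _ = exp (m * q) := by rw [← exp_nat_mul]
      _ ≤ exp (16 / 5) := exp_le_exp.mpr hmq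
      _ ≤ 32 := exp_sixteen_div_five_le
  calc 3 * (n + 1) * m / (32 * n ^ 3) ≤ (32 : ℝ)⁻¹ := by
        rw [div_le_iff₀ (by positivity)]
        nlinarith [mul_le_mul_of_nonneg_left hmn' (by linarith : (0 : ℝ) ≤ 3 * (n + 1))]
    _ ≤ ((1 + q) ^ m)⁻¹ := by gcongr
    _ = _ := by rw [hr, inv_pow]

theorem le_A5 {n j : ℕ} (hn : 3 ≤ n) (hj1 : 1 ≤ j) (hj2 : j + 2 ≤ n) :
    exp (-2) / (4 * n ^ 3) * (exp 1 * n ^ 2 / (2 * (n - j : ℕ))) ^ (n - j) ≤ A5 n j := by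
  set m := n - j
  have hm0 : m ≠ 0 := by omega
  have hn3 : (3 : ℝ) ≤ n := mod_cast hn
  have hm' : (0 : ℝ) < m := by positivity
  set p : ℝ := 8 / (3 * (n + 1))
  set r : ℝ := ((n : ℝ) ^ 2 - n - 2 * m + 2) / n ^ 2
  have hweight : exp (-1) * p ≤ exp (-(2 * mu5 n j)) + D5 n j :=
    exp_one_mul_le_exp_neg_add_min (by linarith [mu5_nonneg n j]) (by positivity)
      (by rw [div_le_one (by positivity)]; linarith) (le_d5 hn hj1 hj2)
  have hmN : m ≤ n.choose 2 + 1 := by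
    have hmn : (m : ℝ) + 1 ≤ n := mod_cast (by omega : m + 1 ≤ n)
    have : (m : ℝ) ≤ n.choose 2 + 1 := by rw [Nat.cast_choose_two]; nlinarith
    exact_mod_cast this
  have hK : ((n.choose 2 + 1 - m : ℕ) : ℝ) = n ^ 2 / 2 * r := by
    rw [Nat.cast_sub hmN, Nat.cast_add, Nat.cast_one, Nat.cast_choose_two]
    simp only [r]
    field_simp
    ring
  have hr : 1 / (4 * n ^ 3) ≤ r ^ m * p / m :=
    calc 1 / (4 * (n : ℝ) ^ 3) = 3 * (n + 1) * m / (32 * n ^ 3) * p / m := by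
          simp only [p]; field_simp; ring
      _ ≤ r ^ m * p / m := by gcongr; exact three_mul_div_le_pow hn (by omega)
  calc exp (-2) / (4 * n ^ 3) * (exp 1 * n ^ 2 / (2 * m)) ^ m
      = exp (-2) * (exp 1 * n ^ 2 / (2 * m)) ^ m * (1 / (4 * n ^ 3)) := by ring
    _ ≤ exp (-2) * (exp 1 * n ^ 2 / (2 * m)) ^ m * (r ^ m * p / m) := by gcongr
    _ = (exp 1 * (n.choose 2 + 1 - m : ℕ) / m) ^ m / (exp 1 * m) * (exp (-1) * p) := by
        rw [hK, show (-2 : ℝ) = -1 + -1 by norm_num, exp_add, exp_neg]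
        field_simp
        rw [← mul_pow, mul_comm]; congr 2; ring
    _ ≤ (n.choose 2).choose m * (exp (-(2 * mu5 n j)) + D5 n j) := by
        gcongr
        exact exp_one_mul_div_pow_div_le_choose hm0
    _ = A5 n j := (A5_eq n j).symm

theorem stmt_14 (n j : ℕ) (hn : 3 ≤ n) (hj1 : 1 ≤ j) (hj2 : j ≤ n - 2) :
    Real.exp (-2) / (4 * (n : ℝ) ^ 3) *
        ((n : ℝ) ^ (1 - (j : ℝ) / n) * kappa ((j : ℝ) / n)) ^ n ≤ A5 n j ∧
    A5 n j ≤ 2 * ((n : ℝ) ^ (1 - (j : ℝ) / n) * kappa ((j : ℝ) / n)) ^ n := by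
  rw [rpow_mul_kappa_pow (by omega)]
  exact ⟨le_A5 hn hj1 (by omega), A5_le n j⟩
end
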